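/- arXiv:0712.2940 — 2 statements merged into one kernel-verified Lean document; each statement's English description precedes it below -/
import Mathlib

section
/- For every z ∈ ℝ, the Stein equation f'(x) − x f(x) = 1_{(−∞,z]}(x) − P(Z ≤ z), x ∈ ℝ, admits a solution f which is bounded by √(2π)/4, piecewise continuously differentiable, and such that ‖f'‖_∞ ≤ 1. -/
open MeasureTheory ProbabilityTheory Real Set

/-- `f` is continuous and piecewise continuously differentiable, with derivative `f'`
(outside a finite exceptional set). -/
def PiecewiseC1 (f f' : ℝ → ℝ) : Prop :=
  Continuous f ∧ ∃ S : Finset ℝ,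
    (∀ x ∉ S, HasDerivAt f (f' x) x) ∧ ContinuousOn f' ((S : Set ℝ)ᶜ)


/-! The solution is `f x = Φ (min x z) * Φ (-max x z) / φ x`, `φ` and `Φ` being the standard
normal density and distribution function. On each side of `z` it is a multiple of `Φ / φ` or of
its reflection `x ↦ Φ (-x) / φ x`, and `(Φ / φ)' = 1 + x Φ / φ` gives the equation. The bound on
`f'` comes from the Mills ratio inequality `x Φ(-x) ≤ φ(x)`. The bound on `f` reduces to
`Φ(x) Φ(-x) ≤ √(2π)/4 · φ(x)`, i.e. `1 - √(2π) φ(x) ≤ (Φ(x) - Φ(-x))²`: the left side is the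
two-dimensional Gaussian mass of the disc of radius `x` (computed in polar coordinates), the right
side that of the square `[-x, x]²` containing it. -/

open Filter Topology

local notation "φ" => gaussianPDFReal 0 1

lemma gaussianPDFReal_zero_one : φ = fun x => (√(2 * π))⁻¹ * exp (-x ^ 2 / 2) := by
  simp [gaussianPDFReal_def]

lemma gaussianPDFReal_zero_one_neg (x : ℝ) : φ (-x) = φ x := by
  simp [gaussianPDFReal_zero_one]

lemma hasDerivAt_gaussianPDFReal_zero_one (x : ℝ) : HasDerivAt φ (-x * φ x) x := by
  have h : HasDerivAt (fun t : ℝ => -t ^ 2 / 2) (-x) x := by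
    simpa using ((hasDerivAt_pow 2 x).neg.div_const 2).congr_deriv (by ring)
  rw [gaussianPDFReal_zero_one]
  exact (h.exp.const_mul _).congr_deriv (by ring)

lemma continuous_gaussianPDFReal_zero_one : Continuous φ :=
  continuous_iff_continuousAt.2 fun x => (hasDerivAt_gaussianPDFReal_zero_one x).continuousAt

lemma tendsto_gaussianPDFReal_zero_one_atTop : Tendsto φ atTop (𝓝 0) := by
  have h : Tendsto (fun t : ℝ => -t ^ 2 / 2) atTop atBot :=
    (tendsto_neg_atTop_atBot.comp (tendsto_pow_atTop two_ne_zero)).atBot_div_const two_pos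
  rw [gaussianPDFReal_zero_one]
  simpa using (tendsto_exp_atBot.comp h).const_mul (√(2 * π))⁻¹

lemma sqrt_two_pi_mul_gaussianPDFReal_zero_one_zero : √(2 * π) * φ 0 = 1 := by
  rw [gaussianPDFReal_zero_one, ← mul_assoc, mul_inv_cancel₀ (by positivity)]
  simp

lemma gaussianPDFReal_zero_one_mul_of_sq_add_sq {s t r : ℝ} (h : s ^ 2 + t ^ 2 = r ^ 2) :
    φ s * φ t = φ 0 * φ r := by
  simp only [gaussianPDFReal_zero_one]
  rw [mul_mul_mul_comm, mul_mul_mul_comm _ (exp _), ← exp_add, ← exp_add, ← h]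
  ring_nf

lemma hasDerivAt_neg_gaussianPDFReal_zero_one (x : ℝ) :
    HasDerivAt (fun t => -φ t) (x * φ x) x :=
  (hasDerivAt_gaussianPDFReal_zero_one x).neg.congr_deriv (by ring)

lemma integrable_mul_gaussianPDFReal_zero_one : Integrable fun t => t * φ t := by
  refine ((integrable_mul_exp_neg_mul_sq (b := 1 / 2) (by norm_num)).const_mul
    (√(2 * π))⁻¹).congr (ae_of_all _ fun t => ?_)
  simp only [gaussianPDFReal_zero_one]; ring_nf

lemma integral_Ioi_mul_gaussianPDFReal_zero_one (x : ℝ) : ∫ t in Ioi x, t * φ t = φ x := by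
  rw [integral_Ioi_of_hasDerivAt_of_tendsto' (fun t _ => hasDerivAt_neg_gaussianPDFReal_zero_one t)
    integrable_mul_gaussianPDFReal_zero_one.integrableOn
    (by simpa using tendsto_gaussianPDFReal_zero_one_atTop.neg)]
  ring

lemma integral_Ioc_zero_mul_gaussianPDFReal_zero_one {x : ℝ} (hx : 0 ≤ x) :
    ∫ r in Ioc 0 x, r * φ r = φ 0 - φ x := by
  rw [← intervalIntegral.integral_of_le hx, intervalIntegral.integral_eq_sub_of_hasDerivAt
    (fun t _ => hasDerivAt_neg_gaussianPDFReal_zero_one t)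
    ((continuous_id.mul continuous_gaussianPDFReal_zero_one).intervalIntegrable _ _)]
  ring

noncomputable def stdNormalCDF (x : ℝ) : ℝ := ∫ t in Iic x, φ t

local notation "Φ" => stdNormalCDF

lemma stdNormalCDF_nonneg (x : ℝ) : 0 ≤ Φ x :=
  setIntegral_nonneg measurableSet_Iic fun t _ => gaussianPDFReal_nonneg 0 1 t

lemma monotone_stdNormalCDF : Monotone Φ := fun _ _ hab =>
  setIntegral_mono_set (integrable_gaussianPDFReal 0 1).integrableOn
    (ae_of_all _ (gaussianPDFReal_nonneg 0 1)) (Iic_subset_Iic.2 hab).eventuallyLE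

lemma stdNormalCDF_neg (x : ℝ) : Φ (-x) = ∫ t in Ioi x, φ t := by
  simpa only [stdNormalCDF, neg_neg, gaussianPDFReal_zero_one_neg] using
    integral_comp_neg_Iic (-x) φ

lemma stdNormalCDF_add_stdNormalCDF_neg (x : ℝ) : Φ x + Φ (-x) = 1 := by
  rw [stdNormalCDF_neg, ← integral_gaussianPDFReal_eq_one 0 one_ne_zero]
  exact intervalIntegral.integral_Iic_add_Ioi (integrable_gaussianPDFReal 0 1).integrableOn
    (integrable_gaussianPDFReal 0 1).integrableOn

lemma stdNormalCDF_le_one (x : ℝ) : Φ x ≤ 1 := by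
  linarith [stdNormalCDF_add_stdNormalCDF_neg x, stdNormalCDF_nonneg (-x)]

lemma stdNormalCDF_sub_stdNormalCDF {a b : ℝ} (hab : a ≤ b) :
    Φ b - Φ a = ∫ t in Icc a b, φ t := by
  rw [integral_Icc_eq_integral_Ioc, ← intervalIntegral.integral_of_le hab]
  exact intervalIntegral.integral_Iic_sub_Iic (integrable_gaussianPDFReal 0 1).integrableOn
    (integrable_gaussianPDFReal 0 1).integrableOn

lemma hasDerivAt_stdNormalCDF (x : ℝ) : HasDerivAt Φ (φ x) x := by
  have hΦ : (fun y => Φ 0 + ∫ t in (0 : ℝ)..y, φ t) = Φ := by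
    funext y
    rw [← intervalIntegral.integral_Iic_sub_Iic (integrable_gaussianPDFReal 0 1).integrableOn
      (integrable_gaussianPDFReal 0 1).integrableOn, stdNormalCDF, stdNormalCDF]
    ring
  rw [← hΦ]
  exact (intervalIntegral.integral_hasDerivAt_right
    (integrable_gaussianPDFReal 0 1).intervalIntegrable
    (continuous_gaussianPDFReal_zero_one.stronglyMeasurableAtFilter _ _)
    continuous_gaussianPDFReal_zero_one.continuousAt).const_add _

lemma continuous_stdNormalCDF : Continuous Φ :=
  continuous_iff_continuousAt.2 fun x => (hasDerivAt_stdNormalCDF x).continuousAt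

lemma gaussianReal_Iic_toReal (z : ℝ) : ((gaussianReal 0 1) (Iic z)).toReal = Φ z := by
  rw [gaussianReal_apply_eq_integral 0 one_ne_zero]
  exact ENNReal.toReal_ofReal (stdNormalCDF_nonneg z)

lemma mul_stdNormalCDF_neg_le (x : ℝ) : x * Φ (-x) ≤ φ x := by
  rw [stdNormalCDF_neg, ← integral_const_mul, ← integral_Ioi_mul_gaussianPDFReal_zero_one x]
  refine setIntegral_mono_on ((integrable_gaussianPDFReal 0 1).integrableOn.const_mul x)
    integrable_mul_gaussianPDFReal_zero_one.integrableOn measurableSet_Ioi fun t ht => ?_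
  exact mul_le_mul_of_nonneg_right (le_of_lt ht) (gaussianPDFReal_nonneg 0 1 t)

lemma integral_disk_gaussianPDFReal_zero_one {x : ℝ} (hx : 0 ≤ x) :
    ∫ p : ℝ × ℝ in {p | p.1 ^ 2 + p.2 ^ 2 ≤ x ^ 2}, φ p.1 * φ p.2 = 1 - √(2 * π) * φ x := by
  set D : Set (ℝ × ℝ) := {p | p.1 ^ 2 + p.2 ^ 2 ≤ x ^ 2}
  set F : ℝ → ℝ := (Ioc 0 x).indicator fun r => φ 0 * (r * φ r)
  have hpolar : EqOn
      (fun p : ℝ × ℝ => p.1 • D.indicator (fun p => φ p.1 * φ p.2) (polarCoord.symm p))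
      (fun p => F p.1) polarCoord.target := by
    rintro ⟨r, θ⟩ ⟨hr, -⟩
    change 0 < r at hr
    have hsq : (r * cos θ) ^ 2 + (r * sin θ) ^ 2 = r ^ 2 := by
      linear_combination r ^ 2 * cos_sq_add_sin_sq θ
    have hmem : (r * cos θ, r * sin θ) ∈ D ↔ r ∈ Ioc 0 x := by
      simp only [D, mem_ofPred_eq, hsq, mem_Ioc, hr, true_and]
      exact sq_le_sq₀ hr.le hx
    simp only [polarCoord_symm_apply, smul_eq_mul, F]
    by_cases h : r ∈ Ioc 0 x
    · rw [indicator_of_mem (hmem.2 h), indicator_of_mem h,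
        gaussianPDFReal_zero_one_mul_of_sq_add_sq hsq]
      ring
    · rw [indicator_of_notMem (mt hmem.1 h), indicator_of_notMem h, mul_zero]
  rw [← integral_indicator (measurableSet_le (by fun_prop) (by fun_prop)),
    ← integral_comp_polarCoord_symm,
    setIntegral_congr_fun polarCoord.open_target.measurableSet hpolar, polarCoord_target,
    Measure.volume_eq_prod, ← Measure.prod_restrict, integral_fun_fst,
    setIntegral_indicator measurableSet_Ioc, inter_eq_right.2 Ioc_subset_Ioi_self,
    integral_const_mul, integral_Ioc_zero_mul_gaussianPDFReal_zero_one hx,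
    measureReal_restrict_apply_univ, volume_real_Ioo_of_le (by linarith [pi_pos]), smul_eq_mul]
  have h2π : π - -π = √(2 * π) * √(2 * π) := by rw [mul_self_sqrt (by positivity)]; ring
  rw [h2π]
  linear_combination (√(2 * π) * φ 0 + 1 - √(2 * π) * φ x) *
    sqrt_two_pi_mul_gaussianPDFReal_zero_one_zero

lemma one_sub_le_sq_integral_Icc_gaussianPDFReal_zero_one {x : ℝ} (hx : 0 ≤ x) :
    1 - √(2 * π) * φ x ≤ (∫ t in Icc (-x) x, φ t) ^ 2 := by
  have hdisk : {p : ℝ × ℝ | p.1 ^ 2 + p.2 ^ 2 ≤ x ^ 2} ⊆ Icc (-x) x ×ˢ Icc (-x) x :=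
    fun p hp => by
      rw [mem_ofPred_eq] at hp
      exact ⟨abs_le_of_sq_le_sq' (by nlinarith [sq_nonneg p.2]) hx,
        abs_le_of_sq_le_sq' (by nlinarith [sq_nonneg p.1]) hx⟩
  rw [← integral_disk_gaussianPDFReal_zero_one hx, pow_two (∫ t in Icc (-x) x, φ t),
    ← setIntegral_prod_mul, ← Measure.volume_eq_prod]
  exact setIntegral_mono_set
    ((integrable_gaussianPDFReal 0 1).mul_prod (integrable_gaussianPDFReal 0 1)).integrableOn
    (ae_of_all _ fun p => mul_nonneg (gaussianPDFReal_nonneg 0 1 _) (gaussianPDFReal_nonneg 0 1 _))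
    hdisk.eventuallyLE

lemma stdNormalCDF_mul_stdNormalCDF_neg_le (x : ℝ) : Φ x * Φ (-x) ≤ √(2 * π) / 4 * φ x := by
  wlog hx : 0 ≤ x generalizing x
  · simpa [mul_comm, gaussianPDFReal_zero_one_neg] using this (-x) (by linarith)
  have hsq := one_sub_le_sq_integral_Icc_gaussianPDFReal_zero_one hx
  rw [← stdNormalCDF_sub_stdNormalCDF (by linarith)] at hsq
  have hsum := stdNormalCDF_add_stdNormalCDF_neg x
  nlinarith

lemma hasDerivAt_stdNormalCDF_div (x : ℝ) :
    HasDerivAt (fun t => Φ t / φ t) (1 + x * (Φ x / φ x)) x := by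
  have hφ := (gaussianPDFReal_pos 0 1 x one_ne_zero).ne'
  refine ((hasDerivAt_stdNormalCDF x).div (hasDerivAt_gaussianPDFReal_zero_one x) hφ).congr_deriv ?_
  field_simp
  ring

/-- For `y = z` this is the value of `steinIicSolutionDeriv z x` at `x ≤ z`. -/
lemma stdNormalCDF_neg_mul_one_add_mem_Icc {x y : ℝ} (hxy : x ≤ y) :
    Φ (-y) * (1 + x * (Φ x / φ x)) ∈ Icc 0 1 := by
  have hφ := gaussianPDFReal_pos 0 1 x one_ne_zero
  have hmills : -x * Φ x ≤ φ x := by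
    simpa [gaussianPDFReal_zero_one_neg] using mul_stdNormalCDF_neg_le (-x)
  have hpos : 0 ≤ 1 + x * (Φ x / φ x) := by
    rw [show 1 + x * (Φ x / φ x) = (φ x + x * Φ x) / φ x by field_simp]
    exact div_nonneg (by linarith) hφ.le
  refine ⟨mul_nonneg (stdNormalCDF_nonneg _) hpos, ?_⟩
  rcases le_total x 0 with hx | hx
  · have hnonpos : x * (Φ x / φ x) ≤ 0 :=
      mul_nonpos_of_nonpos_of_nonneg hx (div_nonneg (stdNormalCDF_nonneg x) hφ.le)
    nlinarith [stdNormalCDF_nonneg (-y), stdNormalCDF_le_one (-y)]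
  · calc Φ (-y) * (1 + x * (Φ x / φ x))
        ≤ Φ (-x) * (1 + x * (Φ x / φ x)) :=
          mul_le_mul_of_nonneg_right (monotone_stdNormalCDF (neg_le_neg hxy)) hpos
      _ = Φ (-x) + x * Φ (-x) * Φ x / φ x := by ring
      _ ≤ Φ (-x) + φ x * Φ x / φ x := by
          gcongr
          · exact stdNormalCDF_nonneg x
          · exact mul_stdNormalCDF_neg_le x
      _ = 1 := by
          rw [mul_div_cancel_left₀ _ hφ.ne', add_comm, stdNormalCDF_add_stdNormalCDF_neg]

noncomputable def steinIicSolution (z x : ℝ) : ℝ := Φ (min x z) * Φ (-max x z) / φ x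

noncomputable def steinIicSolutionDeriv (z x : ℝ) : ℝ :=
  x * steinIicSolution z x + (Iic z).indicator (fun _ => 1) x - Φ z

lemma steinIicSolution_neg (z x : ℝ) : steinIicSolution (-z) (-x) = steinIicSolution z x := by
  rw [steinIicSolution, steinIicSolution, min_neg_neg, max_neg_neg, neg_neg, mul_comm,
    gaussianPDFReal_zero_one_neg]

lemma steinIicSolution_of_le {z x : ℝ} (h : x ≤ z) :
    steinIicSolution z x = Φ (-z) * (Φ x / φ x) := by
  rw [steinIicSolution, min_eq_left h, max_eq_right h]
  ring

lemma continuous_steinIicSolution (z : ℝ) : Continuous (steinIicSolution z) := by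
  refine Continuous.div ?_ continuous_gaussianPDFReal_zero_one
    fun x => (gaussianPDFReal_pos 0 1 x one_ne_zero).ne'
  exact (continuous_stdNormalCDF.comp (continuous_id.min continuous_const)).mul
    (continuous_stdNormalCDF.comp (continuous_id.max continuous_const).neg)

lemma steinIicSolution_nonneg (z x : ℝ) : 0 ≤ steinIicSolution z x :=
  div_nonneg (mul_nonneg (stdNormalCDF_nonneg _) (stdNormalCDF_nonneg _))
    (gaussianPDFReal_nonneg 0 1 x)

lemma steinIicSolution_le (z x : ℝ) : steinIicSolution z x ≤ √(2 * π) / 4 := by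
  have hφ := gaussianPDFReal_pos 0 1 x one_ne_zero
  rw [steinIicSolution, div_le_iff₀ hφ]
  calc Φ (min x z) * Φ (-max x z) ≤ Φ x * Φ (-x) :=
        mul_le_mul (monotone_stdNormalCDF (min_le_left x z))
          (monotone_stdNormalCDF (neg_le_neg (le_max_left x z)))
          (stdNormalCDF_nonneg _) (stdNormalCDF_nonneg _)
    _ ≤ √(2 * π) / 4 * φ x := stdNormalCDF_mul_stdNormalCDF_neg_le x

lemma hasDerivAt_steinIicSolution_of_lt {z x : ℝ} (h : x < z) :
    HasDerivAt (steinIicSolution z) (x * steinIicSolution z x + Φ (-z)) x := by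
  have hloc : (fun t => Φ (-z) * (Φ t / φ t)) =ᶠ[𝓝 x] steinIicSolution z := by
    filter_upwards [Iio_mem_nhds h] with t ht
    exact (steinIicSolution_of_le ht.le).symm
  refine ((hasDerivAt_stdNormalCDF_div x).const_mul (Φ (-z))).congr_of_eventuallyEq hloc.symm
    |>.congr_deriv ?_
  rw [steinIicSolution_of_le h.le]
  ring

lemma hasDerivAt_steinIicSolution_of_gt {z x : ℝ} (h : z < x) :
    HasDerivAt (steinIicSolution z) (x * steinIicSolution z x - Φ z) x := by
  have hneg := (hasDerivAt_steinIicSolution_of_lt (neg_lt_neg h)).comp x (hasDerivAt_neg x)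
  have heq : steinIicSolution (-z) ∘ Neg.neg = steinIicSolution z :=
    funext (steinIicSolution_neg z)
  rw [heq, steinIicSolution_neg, neg_neg] at hneg
  exact hneg.congr_deriv (by ring)

lemma hasDerivAt_steinIicSolution {z x : ℝ} (h : x ≠ z) :
    HasDerivAt (steinIicSolution z) (steinIicSolutionDeriv z x) x := by
  rcases h.lt_or_gt with hlt | hgt
  · convert hasDerivAt_steinIicSolution_of_lt hlt using 1
    rw [steinIicSolutionDeriv, indicator_of_mem (mem_Iic.2 hlt.le)]
    linear_combination -stdNormalCDF_add_stdNormalCDF_neg z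
  · convert hasDerivAt_steinIicSolution_of_gt hgt using 1
    rw [steinIicSolutionDeriv, indicator_of_notMem (notMem_Iic.2 hgt)]
    ring

lemma continuousOn_steinIicSolutionDeriv (z : ℝ) :
    ContinuousOn (steinIicSolutionDeriv z) {z}ᶜ := by
  intro x hx
  refine ContinuousAt.continuousWithinAt ?_
  have hind : ContinuousAt ((Iic z).indicator fun _ => (1 : ℝ)) x :=
    continuousOn_const.continuousAt_indicator (by rwa [frontier_Iic])
  exact ((continuous_id.mul (continuous_steinIicSolution z)).continuousAt.add hind).sub
    continuousAt_const

lemma abs_steinIicSolutionDeriv_le (z x : ℝ) : |steinIicSolutionDeriv z x| ≤ 1 := by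
  rw [abs_le]
  rcases le_or_gt x z with hle | hgt
  · have hmem := stdNormalCDF_neg_mul_one_add_mem_Icc hle
    have hval : steinIicSolutionDeriv z x = Φ (-z) * (1 + x * (Φ x / φ x)) := by
      rw [steinIicSolutionDeriv, indicator_of_mem (mem_Iic.2 hle), steinIicSolution_of_le hle]
      linear_combination -stdNormalCDF_add_stdNormalCDF_neg z
    constructor <;> linarith [hmem.1, hmem.2]
  · have hmem := stdNormalCDF_neg_mul_one_add_mem_Icc (neg_le_neg hgt.le)
    rw [neg_neg] at hmem
    have hval : steinIicSolutionDeriv z x = -(Φ z * (1 + -x * (Φ (-x) / φ (-x)))) := by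
      rw [steinIicSolutionDeriv, indicator_of_notMem (notMem_Iic.2 hgt), ← steinIicSolution_neg,
        steinIicSolution_of_le (neg_le_neg hgt.le), neg_neg]
      ring
    constructor <;> linarith [hmem.1, hmem.2]

/-- For every `z ∈ ℝ`, the Stein equation `f'(x) − x f(x) = 1_{(−∞,z]}(x) − P(Z ≤ z)` admits a
solution `f` which is bounded by `√(2π)/4`, piecewise continuously differentiable, and such
that `‖f'‖_∞ ≤ 1`. -/
theorem stein_equation_indicator_solution (z : ℝ) :
    ∃ f f' : ℝ → ℝ, PiecewiseC1 f f' ∧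
      (∀ x, |f x| ≤ Real.sqrt (2 * π) / 4) ∧
      (∀ x, |f' x| ≤ 1) ∧
      (∀ x, f' x - x * f x =
        Set.indicator (Set.Iic z) (fun _ => (1 : ℝ)) x
          - ((gaussianReal 0 1) (Set.Iic z)).toReal) := by
  refine ⟨steinIicSolution z, steinIicSolutionDeriv z, ⟨continuous_steinIicSolution z, {z},
    fun x hx => hasDerivAt_steinIicSolution (by simpa using hx),
    by simpa using continuousOn_steinIicSolutionDeriv z⟩,
    fun x => ?_, abs_steinIicSolutionDeriv_le z, fun x => ?_⟩
  · rw [abs_of_nonneg (steinIicSolution_nonneg z x)]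
    exact steinIicSolution_le z x
  · rw [gaussianReal_Iic_toReal, steinIicSolutionDeriv]
    ring
end

section
/- If h : ℝ → ℝ is Borel measurable and bounded by 1/2, then the Stein equation f'(x) − x f(x) = h(x) − E[h(Z)], x ∈ ℝ, admits a solution f which is bounded by √(π/2), Lebesgue-a.e. differentiable, and such that ‖f'‖_∞ ≤ 2. -/
open MeasureTheory ProbabilityTheory Real Set Filter

/-!
The solution is the classical one, `f x = e^{x²/2} ∫_{-∞}^x g t e^{-t²/2} dt` with
`g = h - E[h(Z)]`. By Lebesgue's differentiation theorem it is a.e. differentiable with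
`f' = x f + g`, which is the Stein equation. Since `|g| ≤ 1` and `E[g(Z)] = 0`, the integral up
to `x` equals minus the integral from `x`, so `|f x| ≤ e^{x²/2} ∫_{|x|}^∞ e^{-t²/2} dt`. The
Gaussian tail bounds `e^{x²/2} ∫_x^∞ e^{-t²/2} dt ≤ √(π/2)` and
`x e^{x²/2} ∫_x^∞ e^{-t²/2} dt ≤ 1` then give `|f| ≤ √(π/2)` and `|x f| ≤ 1`,
hence `|f'| ≤ 2`.
-/

lemma exp_sq_div_two_mul_exp_neg_sq_div_two (x : ℝ) :
    rexp (x ^ 2 / 2) * rexp (-x ^ 2 / 2) = 1 := by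
  rw [← exp_add, neg_div, add_neg_cancel, exp_zero]

lemma integrable_exp_neg_sq_div_two : Integrable fun t : ℝ => rexp (-t ^ 2 / 2) := by
  convert integrable_exp_neg_mul_sq (b := 1 / 2) (by norm_num) using 3
  ring

lemma integrable_mul_exp_neg_sq_div_two : Integrable fun t : ℝ => t * rexp (-t ^ 2 / 2) := by
  convert integrable_mul_exp_neg_mul_sq (b := 1 / 2) (by norm_num) using 4
  ring

lemma integral_Ioi_comp_sub_right {E : Type*} [NormedAddCommGroup E] [NormedSpace ℝ E]
    (f : ℝ → E) (a : ℝ) : ∫ t in Ioi a, f (t - a) = ∫ s in Ioi 0, f s := by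
  simpa using (measurePreserving_sub_right volume a).setIntegral_preimage_emb
    (measurableEmbedding_subRight a) f (Ioi 0)

lemma integral_Ioi_zero_exp_neg_sq_div_two :
    ∫ s in Ioi (0 : ℝ), rexp (-s ^ 2 / 2) = √(π / 2) := by
  have h := integral_gaussian_Ioi (1 / 2)
  simp only [neg_mul, one_div_mul_eq_div, div_div_eq_mul_div, div_one] at h
  simp_rw [neg_div, h, show π / 2 = π * 2 / 2 ^ 2 by ring]
  rw [sqrt_div' _ (by positivity), sqrt_sq zero_le_two]

lemma exp_sq_div_two_mul_integral_Ioi_le {x : ℝ} (hx : 0 ≤ x) :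
    rexp (x ^ 2 / 2) * ∫ t in Ioi x, rexp (-t ^ 2 / 2) ≤ √(π / 2) := by
  rw [← integral_const_mul, ← integral_Ioi_zero_exp_neg_sq_div_two,
    ← integral_Ioi_comp_sub_right _ x]
  refine setIntegral_mono_on (integrable_exp_neg_sq_div_two.const_mul _).integrableOn
    (integrable_exp_neg_sq_div_two.comp_sub_right x).integrableOn measurableSet_Ioi
    fun t ht => ?_
  -- for `0 ≤ x ≤ t`: `x²/2 - t²/2 ≤ -(t - x)²/2`
  rw [← exp_add, exp_le_exp]
  nlinarith [mem_Ioi.1 ht]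

lemma integral_Ioi_mul_exp_neg_sq_div_two (x : ℝ) :
    ∫ t in Ioi x, t * rexp (-t ^ 2 / 2) = rexp (-x ^ 2 / 2) := by
  have hderiv : ∀ t ∈ Ici x,
      HasDerivAt (fun t => -rexp (-t ^ 2 / 2)) (t * rexp (-t ^ 2 / 2)) t := by
    intro t _
    have h : HasDerivAt (fun s : ℝ => -s ^ 2 / 2) (-t) t :=
      ((hasDerivAt_pow 2 t).neg.div_const 2).congr_deriv (by ring)
    exact h.exp.neg.congr_deriv (by ring)
  have hlim : Tendsto (fun t : ℝ => -rexp (-t ^ 2 / 2)) atTop (nhds 0) := by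
    simpa [neg_div] using (tendsto_exp_neg_atTop_nhds_zero.comp
      ((tendsto_pow_atTop two_ne_zero).atTop_div_const two_pos)).neg
  rw [integral_Ioi_of_hasDerivAt_of_tendsto' hderiv
    integrable_mul_exp_neg_sq_div_two.integrableOn hlim]
  ring

lemma mul_exp_sq_div_two_mul_integral_Ioi_le (x : ℝ) :
    x * rexp (x ^ 2 / 2) * ∫ t in Ioi x, rexp (-t ^ 2 / 2) ≤ 1 := by
  have hle : x * ∫ t in Ioi x, rexp (-t ^ 2 / 2) ≤ rexp (-x ^ 2 / 2) := by
    rw [← integral_const_mul, ← integral_Ioi_mul_exp_neg_sq_div_two]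
    refine setIntegral_mono_on (integrable_exp_neg_sq_div_two.const_mul _).integrableOn
      ?_ measurableSet_Ioi fun t ht => by gcongr; exact (mem_Ioi.1 ht).le
    exact integrable_mul_exp_neg_sq_div_two.integrableOn
  calc x * rexp (x ^ 2 / 2) * ∫ t in Ioi x, rexp (-t ^ 2 / 2)
      = rexp (x ^ 2 / 2) * (x * ∫ t in Ioi x, rexp (-t ^ 2 / 2)) := by ring
    _ ≤ rexp (x ^ 2 / 2) * rexp (-x ^ 2 / 2) := by gcongr
    _ = 1 := exp_sq_div_two_mul_exp_neg_sq_div_two x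

lemma integral_exp_neg_sq_div_two_mul (g : ℝ → ℝ) :
    ∫ t, rexp (-t ^ 2 / 2) * g t = √(2 * π) * ∫ t, g t ∂gaussianReal 0 1 := by
  rw [integral_gaussianReal_eq_integral_smul one_ne_zero, ← integral_const_mul]
  congr 1 with t
  simp only [gaussianPDFReal, NNReal.coe_one, mul_one, sub_zero, smul_eq_mul]
  field_simp

noncomputable def steinSolution (g : ℝ → ℝ) (x : ℝ) : ℝ :=
  rexp (x ^ 2 / 2) * ∫ t in Iic x, rexp (-t ^ 2 / 2) * g t

lemma ae_hasDerivAt_steinSolution {g : ℝ → ℝ}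
    (hg : Integrable fun t => rexp (-t ^ 2 / 2) * g t) :
    ∀ᵐ x, HasDerivAt (steinSolution g) (x * steinSolution g x + g x) x := by
  filter_upwards [LocallyIntegrable.ae_hasDerivAt_integral hg.locallyIntegrable] with x hx
  have hF : HasDerivAt (fun y => ∫ t in Iic y, rexp (-t ^ 2 / 2) * g t)
      (rexp (-x ^ 2 / 2) * g x) x := by
    have hsplit : (fun y => ∫ t in Iic y, rexp (-t ^ 2 / 2) * g t) = fun y =>
        (∫ t in Iic 0, rexp (-t ^ 2 / 2) * g t) + ∫ t in 0..y, rexp (-t ^ 2 / 2) * g t := by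
      ext y
      rw [← intervalIntegral.integral_Iic_sub_Iic hg.integrableOn hg.integrableOn]
      ring
    rw [hsplit]
    exact (hx 0).const_add _
  have hE : HasDerivAt (fun y : ℝ => rexp (y ^ 2 / 2)) (x * rexp (x ^ 2 / 2)) x :=
    ((hasDerivAt_pow 2 x).div_const 2).exp.congr_deriv (by ring)
  refine (hE.mul hF).congr_deriv ?_
  rw [steinSolution, ← mul_assoc (rexp _), exp_sq_div_two_mul_exp_neg_sq_div_two]
  ring

section Bounds

variable {g : ℝ → ℝ} {M : ℝ}

lemma integrable_exp_neg_sq_div_two_mul (hg : AEStronglyMeasurable g) (hM : ∀ t, |g t| ≤ M) :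
    Integrable fun t => rexp (-t ^ 2 / 2) * g t :=
  integrable_exp_neg_sq_div_two.mul_bdd hg (ae_of_all _ hM)

lemma abs_integral_Iic_exp_neg_sq_div_two_mul_le (hg : AEStronglyMeasurable g)
    (hM : ∀ t, |g t| ≤ M)
    (hcentered : ∫ t, rexp (-t ^ 2 / 2) * g t = 0) (x : ℝ) :
    |∫ t in Iic x, rexp (-t ^ 2 / 2) * g t| ≤ M * ∫ t in Ioi |x|, rexp (-t ^ 2 / 2) := by
  have hset : ∀ s : Set ℝ,
      |∫ t in s, rexp (-t ^ 2 / 2) * g t| ≤ M * ∫ t in s, rexp (-t ^ 2 / 2) := by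
    intro s
    rw [← integral_const_mul, ← norm_eq_abs]
    refine norm_integral_le_of_norm_le (integrable_exp_neg_sq_div_two.const_mul M).integrableOn
      (ae_of_all _ fun t => ?_)
    rw [norm_mul, norm_of_nonneg (exp_pos _).le, mul_comm M]
    exact mul_le_mul_of_nonneg_left (hM t) (exp_pos _).le
  rcases le_total 0 x with hx | hx
  · have hIoi := setIntegral_compl (measurableSet_Iic (a := x))
      (integrable_exp_neg_sq_div_two_mul hg hM)
    rw [compl_Iic, hcentered, zero_sub] at hIoi
    rw [abs_of_nonneg hx, ← abs_neg, ← hIoi]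
    exact hset _
  · have hsymm : ∫ t in Iic x, rexp (-t ^ 2 / 2) = ∫ t in Ioi (-x), rexp (-t ^ 2 / 2) := by
      have h := integral_comp_neg_Iic x fun t => rexp (-t ^ 2 / 2)
      simp only [neg_sq] at h
      exact h
    rw [abs_of_nonpos hx, ← hsymm]
    exact hset _

lemma abs_steinSolution_le (hg : AEStronglyMeasurable g) (hM : ∀ t, |g t| ≤ M)
    (hcentered : ∫ t, rexp (-t ^ 2 / 2) * g t = 0) (x : ℝ) :
    |steinSolution g x| ≤ M * √(π / 2) := by
  have hM0 : 0 ≤ M := (abs_nonneg _).trans (hM 0)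
  calc |steinSolution g x|
      = rexp (x ^ 2 / 2) * |∫ t in Iic x, rexp (-t ^ 2 / 2) * g t| := by
        rw [steinSolution, abs_mul, abs_of_pos (exp_pos _)]
    _ ≤ rexp (x ^ 2 / 2) * (M * ∫ t in Ioi |x|, rexp (-t ^ 2 / 2)) := by
        gcongr; exact abs_integral_Iic_exp_neg_sq_div_two_mul_le hg hM hcentered x
    _ = M * (rexp (|x| ^ 2 / 2) * ∫ t in Ioi |x|, rexp (-t ^ 2 / 2)) := by
        rw [sq_abs]; ring
    _ ≤ M * √(π / 2) := by
        gcongr; exact exp_sq_div_two_mul_integral_Ioi_le (abs_nonneg x)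

lemma abs_mul_steinSolution_le (hg : AEStronglyMeasurable g) (hM : ∀ t, |g t| ≤ M)
    (hcentered : ∫ t, rexp (-t ^ 2 / 2) * g t = 0) (x : ℝ) :
    |x * steinSolution g x| ≤ M := by
  have hM0 : 0 ≤ M := (abs_nonneg _).trans (hM 0)
  calc |x * steinSolution g x|
      = |x| * rexp (x ^ 2 / 2) * |∫ t in Iic x, rexp (-t ^ 2 / 2) * g t| := by
        rw [steinSolution, abs_mul, abs_mul, abs_of_pos (exp_pos _), mul_assoc]
    _ ≤ |x| * rexp (x ^ 2 / 2) * (M * ∫ t in Ioi |x|, rexp (-t ^ 2 / 2)) := by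
        gcongr; exact abs_integral_Iic_exp_neg_sq_div_two_mul_le hg hM hcentered x
    _ = M * (|x| * rexp (|x| ^ 2 / 2) * ∫ t in Ioi |x|, rexp (-t ^ 2 / 2)) := by
        rw [sq_abs]; ring
    _ ≤ M := by
        simpa using mul_le_mul_of_nonneg_left (mul_exp_sq_div_two_mul_integral_Ioi_le |x|) hM0

end Bounds

/-- If `h` is Borel measurable and bounded by `1/2`, the Stein equation
`f'(x) − x f(x) = h(x) − E[h(Z)]` admits a solution `f` bounded by `√(π/2)`,
Lebesgue-a.e. differentiable, with `‖f'‖_∞ ≤ 2`. -/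
theorem stein_equation_bounded_solution (h : ℝ → ℝ) (hmeas : Measurable h)
    (hbound : ∀ x, |h x| ≤ 1 / 2) :
    ∃ f f' : ℝ → ℝ,
      (∀ x, |f x| ≤ Real.sqrt (π / 2)) ∧
      (∀ᵐ x ∂(volume : Measure ℝ), HasDerivAt f (f' x) x) ∧
      (∀ x, |f' x| ≤ 2) ∧
      (∀ x, f' x - x * f x = h x - ∫ y, h y ∂(gaussianReal 0 1)) := by
  set m := ∫ y, h y ∂(gaussianReal 0 1)
  set g : ℝ → ℝ := fun t => h t - m
  have hm : |m| ≤ 1 / 2 := by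
    simpa using norm_integral_le_of_norm_le_const (μ := gaussianReal 0 1) (f := h)
      (ae_of_all _ hbound)
  have hg : AEStronglyMeasurable g := (hmeas.sub measurable_const).aestronglyMeasurable
  have hg_le : ∀ t, |g t| ≤ 1 := fun t =>
    (abs_sub _ _).trans (by linarith [hbound t])
  have hcentered : ∫ t, rexp (-t ^ 2 / 2) * g t = 0 := by
    have hint : Integrable h (gaussianReal 0 1) :=
      .of_bound hmeas.aestronglyMeasurable (1 / 2) (ae_of_all _ hbound)
    rw [integral_exp_neg_sq_div_two_mul, integral_sub hint (integrable_const m)]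
    simp [m]
  refine ⟨steinSolution g, fun x => x * steinSolution g x + g x, fun x => ?_,
    ae_hasDerivAt_steinSolution (integrable_exp_neg_sq_div_two_mul hg hg_le), fun x => ?_,
    fun x => by ring⟩
  · simpa using abs_steinSolution_le hg hg_le hcentered x
  · calc |x * steinSolution g x + g x| ≤ |x * steinSolution g x| + |g x| := abs_add_le _ _
      _ ≤ 1 + 1 := add_le_add (abs_mul_steinSolution_le hg hg_le hcentered x) (hg_le x)
      _ = 2 := by norm_num
end
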